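/- arXiv:2002.12234 — 5 statements merged into one kernel-verified Lean document; each statement's English description precedes it below -/
import Mathlib

section
/- Let k ≥ 4 be even and n sufficiently large. If H is a k-uniform hypergraph on n vertices with at least 2k²·C(n−2, k−2) edges such that H is not contained in a star (the family of all k-sets containing a fixed vertex), then there exist three edges e₁, e₂, e₃ of H with e₁ ∩ (e₂ ∪ e₃) = ∅ and |e₂ ∩ e₃| ∈ {0, k/2}. -/
/-!
Write `k = 2t + 2`. If no such triple exists, `H` is not intersecting, since an intersecting
`r`-graph that is not a star has at most `r²·C(n-2, r-2)` edges; so it has disjoint edges `e`, `f`.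
At most `k²·C(n-2, k-2)` edges meet both, hence the edges missing `f`, or those missing `e`, number
at least `k²·C(n-2, k-2)/2`. This family is intersecting and no two of its members share exactly
`t + 1` points, so the link of a vertex of maximal degree in one member is a `(2t+1)`-graph with
at least `1/k` of its edges in which no two edges share exactly `t` points.

Such a graph has only `O(n^(2t-1))` edges (a Frankl–Füredi type bound), because every edge
contains a `t`-set of small degree: the link of a heavy `t`-set `T` is intersecting, hence a star
with some centre `x`, and the many edges through `T ∪ {x}` contain a large sunflower with that
core. Distinct such cores share fewer than `t` points, so if all `t`-subsets of one edge were
heavy, their cores would form a Steiner system `S(t, t+1, 2t+1)`; none exists,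
because a prime `p ∣ t + 1` does not divide `C(t+p, p-1)` (Lucas). This contradicts
`C(n-2, 2t) = Θ(n^(2t))` for large `n`.
-/

open Finset

variable {α : Type*} [DecidableEq α]

section Counting

variable [Fintype α] {F : Finset (Finset α)} {r : ℕ}

theorem card_filter_superset_le (hF : ∀ A ∈ F, #A = r) (V : Finset α) :
    #{A ∈ F | V ⊆ A} ≤ (Fintype.card α - #V).choose (r - #V) := by
  rcases le_or_gt #V r with hV | hV
  · rw [← card_univ, ← card_filter_powersetCard_subset V univ r (subset_univ V) hV]
    refine card_le_card fun A hA => ?_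
    simp only [mem_filter, mem_powersetCard] at hA ⊢
    exact ⟨⟨subset_univ A, hF A hA.1⟩, hA.2⟩
  · rw [filter_false_of_mem fun A hA hVA => (card_le_card hVA).not_gt (hF A hA ▸ hV)]
    exact Nat.zero_le _

theorem card_filter_not_disjoint_not_disjoint_le (hF : ∀ A ∈ F, #A = r) {a b : Finset α}
    (hab : Disjoint a b) :
    #{A ∈ F | ¬Disjoint A a ∧ ¬Disjoint A b} ≤
      #a * #b * (Fintype.card α - 2).choose (r - 2) := by
  have hcover : {A ∈ F | ¬Disjoint A a ∧ ¬Disjoint A b} ⊆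
      a.biUnion fun u => b.biUnion fun w => {A ∈ F | {u, w} ⊆ A} := by
    intro A hA
    simp only [mem_filter, not_disjoint_iff] at hA
    obtain ⟨hAF, ⟨u, huA, hua⟩, ⟨w, hwA, hwb⟩⟩ := hA
    simp only [mem_biUnion, mem_filter, insert_subset_iff, singleton_subset_iff]
    exact ⟨u, hua, w, hwb, hAF, huA, hwA⟩
  have hpair : ∀ u ∈ a, ∀ w ∈ b, #{A ∈ F | {u, w} ⊆ A} ≤
      (Fintype.card α - 2).choose (r - 2) := fun u hu w hw => by
    have huw : u ≠ w := fun h => disjoint_left.mp hab hu (h ▸ hw)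
    simpa [card_pair huw] using card_filter_superset_le hF {u, w}
  calc #{A ∈ F | ¬Disjoint A a ∧ ¬Disjoint A b}
      ≤ ∑ u ∈ a, ∑ w ∈ b, #{A ∈ F | {u, w} ⊆ A} :=
        (card_le_card hcover).trans <| card_biUnion_le.trans <|
          sum_le_sum fun _ _ => card_biUnion_le
    _ ≤ ∑ _u ∈ a, ∑ _w ∈ b, (Fintype.card α - 2).choose (r - 2) :=
        sum_le_sum fun u hu => sum_le_sum fun w hw => hpair u hu w hw
    _ = #a * #b * (Fintype.card α - 2).choose (r - 2) := by simp [mul_assoc]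

theorem card_le_card_filter_disjoint_add_card_filter_disjoint (hF : ∀ A ∈ F, #A = r)
    {e f : Finset α} (hef : Disjoint e f) :
    #F ≤ #{A ∈ F | Disjoint f A} + #{A ∈ F | Disjoint e A} +
      #e * #f * (Fintype.card α - 2).choose (r - 2) := by
  have hcover : F ⊆ {A ∈ F | Disjoint f A} ∪ {A ∈ F | Disjoint e A} ∪
      {A ∈ F | ¬Disjoint A e ∧ ¬Disjoint A f} := fun A hA => by
    simp only [mem_union, mem_filter, disjoint_comm (a := A)]
    tauto
  calc #F ≤ #{A ∈ F | Disjoint f A} + #{A ∈ F | Disjoint e A} +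
        #{A ∈ F | ¬Disjoint A e ∧ ¬Disjoint A f} :=
      (card_le_card hcover).trans <| (card_union_le _ _).trans <|
        Nat.add_le_add_right (card_union_le _ _) _
    _ ≤ _ := Nat.add_le_add_left (card_filter_not_disjoint_not_disjoint_le hF hef) _

theorem card_le_of_intersecting_of_not_star (hF : ∀ A ∈ F, #A = r)
    (hint : (F : Set (Finset α)).Intersecting) (hstar : ¬∃ x, ∀ A ∈ F, x ∈ A) :
    #F ≤ r ^ 2 * (Fintype.card α - 2).choose (r - 2) := by
  obtain rfl | ⟨a, ha⟩ := F.eq_empty_or_nonempty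
  · simp
  push Not at hstar
  choose avoid havoidF havoid using hstar
  have hcover : F ⊆ a.biUnion fun u =>
      {A ∈ F | ¬Disjoint A {u} ∧ ¬Disjoint A (avoid u)} := fun A hA => by
    obtain ⟨u, huA, hua⟩ := not_disjoint_iff.mp (hint hA ha)
    simp only [mem_biUnion, mem_filter, disjoint_singleton_right, not_not]
    exact ⟨u, hua, hA, huA, hint hA (havoidF u)⟩
  calc #F ≤ ∑ u ∈ a, #{A ∈ F | ¬Disjoint A {u} ∧ ¬Disjoint A (avoid u)} :=
        (card_le_card hcover).trans card_biUnion_le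
    _ ≤ ∑ _u ∈ a, r * (Fintype.card α - 2).choose (r - 2) := sum_le_sum fun u _ => by
        simpa [hF _ (havoidF u)] using card_filter_not_disjoint_not_disjoint_le hF
          (disjoint_singleton_left.mpr (havoid u))
    _ = r ^ 2 * (Fintype.card α - 2).choose (r - 2) := by simp [hF a ha, sq, mul_assoc]

end Counting

theorem exists_card_le_mul_card_filter_mem_of_intersecting {F : Finset (Finset α)} {a : Finset α}
    (hint : (F : Set (Finset α)).Intersecting) (ha : a ∈ F) :
    ∃ v, #F ≤ #a * #{A ∈ F | v ∈ A} := by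
  have hane : a.Nonempty := nonempty_iff_ne_empty.mpr (hint.ne_bot ha)
  obtain ⟨v, -, hv⟩ := exists_max_image a (fun u => #{A ∈ F | u ∈ A}) hane
  refine ⟨v, ?_⟩
  have hcover : F ⊆ a.biUnion fun u => {A ∈ F | u ∈ A} := fun A hA => by
    obtain ⟨u, huA, hua⟩ := not_disjoint_iff.mp (hint hA ha)
    exact mem_biUnion.mpr ⟨u, hua, mem_filter.mpr ⟨hA, huA⟩⟩
  calc #F ≤ ∑ u ∈ a, #{A ∈ F | u ∈ A} := (card_le_card hcover).trans card_biUnion_le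
    _ ≤ ∑ _u ∈ a, #{A ∈ F | v ∈ A} := sum_le_sum hv
    _ = #a * #{A ∈ F | v ∈ A} := by simp

section Sunflower

def IsSunflower (P : Finset (Finset α)) (U : Finset α) : Prop :=
  (∀ A ∈ P, U ⊆ A) ∧ (P : Set (Finset α)).Pairwise fun A B => A ∩ B = U

variable {F P : Finset (Finset α)} {U : Finset α} {t : ℕ}

theorem IsSunflower.exists_inter_eq_inter_core (hP : IsSunflower P U) {s : Finset α}
    (hs : #s < #P) : ∃ A ∈ P, s ∩ A = s ∩ U := by
  by_contra! hmeet
  have hne : ∀ A ∈ P, (s ∩ (A \ U)).Nonempty := fun A hA => by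
    obtain ⟨x, hxA, hxU⟩ := not_subset.mp fun h =>
      hmeet A hA (subset_antisymm h (inter_subset_inter_left (hP.1 A hA)))
    exact ⟨x, by simp_all⟩
  have hdisj : (P : Set (Finset α)).PairwiseDisjoint fun A => s ∩ (A \ U) :=
    fun A hA B hB hAB => disjoint_left.mpr fun x hxA hxB => by
      have hx : x ∈ A ∩ B := by simp_all
      simp_all [hP.2 hA hB hAB]
  refine hs.not_ge <| calc
    #P = ∑ _A ∈ P, 1 := by simp
    _ ≤ ∑ A ∈ P, #(s ∩ (A \ U)) := sum_le_sum fun A hA => card_pos.mpr (hne A hA)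
    _ = #(P.biUnion fun A => s ∩ (A \ U)) := (card_biUnion hdisj).symm
    _ ≤ #s := card_le_card (biUnion_subset.mpr fun _ _ => inter_subset_left)

theorem exists_isSunflower {G : Finset (Finset α)} {m d : ℕ} (hm : 0 < m)
    (hG : ∀ A ∈ G, U ⊆ A ∧ #(A \ U) = m) (hd : ∀ y ∉ U, #{A ∈ G | y ∈ A} ≤ d)
    (p : ℕ) (hGp : p * (m * d) < #G) : ∃ P ⊆ G, #P = p + 1 ∧ IsSunflower P U := by
  induction p with
  | zero =>
    obtain ⟨A, hA⟩ := card_pos.mp (by simpa using hGp)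
    exact ⟨{A}, by simpa using hA, card_singleton A, by simp [IsSunflower, (hG A hA).1]⟩
  | succ p ih =>
    obtain ⟨P, hPG, hPcard, hP⟩ :=
      ih (lt_of_le_of_lt (Nat.mul_le_mul_right _ p.le_succ) hGp)
    set blocked := P.biUnion fun A => (A \ U).biUnion fun y => {B ∈ G | y ∈ B}
    have hblocked : #blocked ≤ (p + 1) * (m * d) := calc
      #blocked ≤ ∑ A ∈ P, ∑ y ∈ A \ U, #{B ∈ G | y ∈ B} :=
        card_biUnion_le.trans (sum_le_sum fun _ _ => card_biUnion_le)
      _ ≤ ∑ A ∈ P, ∑ _y ∈ A \ U, d :=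
        sum_le_sum fun _ _ => sum_le_sum fun _ hy => hd _ (mem_sdiff.mp hy).2
      _ = (p + 1) * (m * d) := by
        rw [sum_congr rfl fun A hA => by rw [sum_const, (hG A (hPG hA)).2, smul_eq_mul],
          sum_const, hPcard, smul_eq_mul]
    obtain ⟨B, hBG, hBfree⟩ := exists_mem_notMem_of_card_lt_card (hblocked.trans_lt hGp)
    have hfree : ∀ A ∈ P, ∀ y ∈ A \ U, y ∉ B := fun A hA y hy hyB =>
      hBfree (mem_biUnion.mpr ⟨A, hA, mem_biUnion.mpr ⟨y, hy, mem_filter.mpr ⟨hBG, hyB⟩⟩⟩)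
    have hcore : ∀ A ∈ P, A ∩ B = U := fun A hA => subset_antisymm
      (fun x hx => by_contra fun hxU =>
        hfree A hA x (mem_sdiff.mpr ⟨(mem_inter.mp hx).1, hxU⟩) (mem_inter.mp hx).2)
      (subset_inter (hP.1 A hA) (hG B hBG).1)
    have hBP : B ∉ P := fun hB => by
      obtain ⟨y, hy⟩ := card_pos.mp ((hG B hBG).2 ▸ hm)
      exact hfree B hB y hy (mem_sdiff.mp hy).1
    refine ⟨insert B P, insert_subset hBG hPG, by rw [card_insert_of_notMem hBP, hPcard], ?_, ?_⟩
    · simpa [forall_mem_insert] using ⟨(hG B hBG).1, hP.1⟩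
    · rw [coe_insert, Set.pairwise_insert]
      exact ⟨hP.2, fun A hA _ => ⟨by rw [inter_comm]; exact hcore A hA, hcore A hA⟩⟩

theorem IsSunflower.card_inter_core_ne
    (hforb : (F : Set (Finset α)).Pairwise fun A B => #(A ∩ B) ≠ t) {B : Finset α}
    (hP : IsSunflower P U) (hPF : P ⊆ F) (hU : #U ≠ t)
    (hB : B ∈ F) (hBP : #B < #P) : #(B ∩ U) ≠ t := by
  by_cases hUB : U ⊆ B
  · rwa [inter_eq_right.mpr hUB]
  obtain ⟨A, hA, hBA⟩ := hP.exists_inter_eq_inter_core hBP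
  rw [← hBA]
  exact hforb hB (hPF hA) fun hAB => hUB (hAB ▸ hP.1 A hA)

theorem IsSunflower.card_inter_lt {U₁ U₂ : Finset α}
    (hP : IsSunflower P U₂) (hPF : P ⊆ F) (hU₁ : ∀ B ∈ F, #(B ∩ U₁) ≠ t)
    (hcard₁ : #U₁ = t + 1) (hcard₂ : #U₂ = t + 1) (hne : U₁ ≠ U₂) (hPcard : t + 1 < #P) :
    #(U₁ ∩ U₂) < t := by
  obtain ⟨A, hA, hU₁A⟩ := hP.exists_inter_eq_inter_core (s := U₁) (by omega)
  have hne_t : #(U₁ ∩ U₂) ≠ t := by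
    rw [← hU₁A, inter_comm]
    exact hU₁ A (hPF hA)
  have hne_succ : #(U₁ ∩ U₂) ≠ t + 1 := fun h => hne <| by
    have h₁ := eq_of_subset_of_card_le inter_subset_left (hcard₁ ▸ h.ge)
    exact eq_of_subset_of_card_le (h₁ ▸ inter_subset_right) (hcard₁ ▸ hcard₂.le)
  have := card_le_card (inter_subset_left (s₁ := U₁) (s₂ := U₂))
  omega

end Sunflower

theorem Nat.Prime.not_dvd_choose_add_pred {p t : ℕ} (hp : p.Prime) (hpt : p ∣ t + 1) :
    ¬p ∣ (t + p).choose (p - 1) := by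
  have hp1 := hp.one_lt
  obtain ⟨m, hm⟩ := hpt
  have hmod : (t + p) % p = p - 1 := by
    rw [show t + p = p * m + (p - 1) by omega, Nat.mul_add_mod, Nat.mod_eq_of_lt (by omega)]
  have := Fact.mk hp
  have hlucas := Choose.choose_modEq_choose_mod_mul_choose_div_nat (n := t + p) (k := p - 1)
    (p := p)
  have hlt : p - 1 < p := by omega
  rw [hmod, Nat.mod_eq_of_lt hlt, Nat.div_eq_of_lt hlt, Nat.choose_self,
    Nat.choose_zero_right, one_mul] at hlucas
  rw [Nat.dvd_iff_mod_eq_zero, hlucas, Nat.mod_eq_of_lt hp1]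
  exact one_ne_zero

theorem exists_subset_card_eq_forall_not_subset {A : Finset α} {𝒞 : Finset (Finset α)} {t : ℕ}
    (ht : t ≠ 0) (hA : #A = 2 * t + 1) (h𝒞 : ∀ U ∈ 𝒞, U ⊆ A ∧ #U = t + 1)
    (hpair : (𝒞 : Set (Finset α)).Pairwise fun U U' => #(U ∩ U') < t) :
    ∃ T ⊆ A, #T = t ∧ ∀ U ∈ 𝒞, ¬T ⊆ U := by
  by_contra! hcover
  -- Fix `S ⊆ A` with `#S = t + 1 - p`. The `C(t+p, p-1)` sets `T` with `S ⊆ T ⊆ A`, `#T = t`,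
  -- lie each in exactly one block, and every block containing `S` holds `p` of them.
  set p := (t + 1).minFac
  have hp : p.Prime := Nat.minFac_prime (by omega)
  have hpt : p ∣ t + 1 := Nat.minFac_dvd _
  have hple : p ≤ t + 1 := Nat.minFac_le (by omega)
  have hp1 := hp.one_lt
  obtain ⟨S, hSA, hS⟩ := exists_subset_card_eq (show t + 1 - p ≤ #A by omega)
  set through : Finset α → Finset (Finset α) := fun U => {T ∈ U.powersetCard t | S ⊆ T}
  have hthroughA : #(through A) = (t + p).choose (p - 1) := by
    rw [card_filter_powersetCard_subset S A t hSA (by omega), hA, hS]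
    congr 1 <;> omega
  have hthroughU : ∀ U ∈ 𝒞, S ⊆ U → #(through U) = p := fun U hU hSU => by
    rw [card_filter_powersetCard_subset S U t hSU (by omega), (h𝒞 U hU).2, hS,
      show t + 1 - (t + 1 - p) = p by omega, show t - (t + 1 - p) = p - 1 by omega,
      Nat.choose_symm hp1.le, Nat.choose_one_right]
  set 𝒞S := {U ∈ 𝒞 | S ⊆ U}
  have hpartition : through A = 𝒞S.biUnion through := by
    ext T
    simp only [through, 𝒞S, mem_biUnion, mem_filter, mem_powersetCard]
    constructor
    · rintro ⟨⟨hTA, hT⟩, hST⟩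
      obtain ⟨U, hU, hTU⟩ := hcover T hTA hT
      exact ⟨U, ⟨hU, hST.trans hTU⟩, ⟨hTU, hT⟩, hST⟩
    · rintro ⟨U, ⟨hU, -⟩, ⟨hTU, hT⟩, hST⟩
      exact ⟨⟨hTU.trans (h𝒞 U hU).1, hT⟩, hST⟩
  have hdisj : (𝒞S : Set (Finset α)).PairwiseDisjoint through :=
    fun U hU U' hU' hUU' => disjoint_left.mpr fun T hT hT' => by
      simp only [through, mem_filter, mem_powersetCard] at hT hT'
      have := card_le_card (subset_inter hT.1.1 hT'.1.1)
      have := hpair (mem_filter.mp hU).1 (mem_filter.mp hU').1 hUU'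
      omega
  apply hp.not_dvd_choose_add_pred hpt
  rw [← hthroughA, hpartition, card_biUnion hdisj,
    sum_congr rfl fun U hU => hthroughU U (mem_filter.mp hU).1 (mem_filter.mp hU).2]
  simp

section FranklFuredi

variable [Fintype α] {F : Finset (Finset α)} {t : ℕ}

theorem exists_forall_mem_of_card_filter_superset_gt (hF : ∀ A ∈ F, #A = 2 * t + 1)
    (hforb : (F : Set (Finset α)).Pairwise fun A B => #(A ∩ B) ≠ t) {T : Finset α} (hT : #T = t)
    (hheavy : (t + 1) ^ 2 * (Fintype.card α - 2).choose (t - 1) < #{A ∈ F | T ⊆ A}) :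
    ∃ x ∉ T, ∀ A ∈ F, T ⊆ A → x ∈ A := by
  set FT := {A ∈ F | T ⊆ A}
  have hinj : Set.InjOn (· \ T) FT := fun A hA B hB hAB => by
    rw [← sdiff_union_of_subset (mem_filter.mp hA).2, ← sdiff_union_of_subset (mem_filter.mp hB).2]
    exact congrArg (· ∪ T) hAB
  have hlink : ∀ A ∈ FT, #(A \ T) = t + 1 := fun A hA => by
    rw [card_sdiff_of_subset (mem_filter.mp hA).2, hF A (mem_filter.mp hA).1, hT]
    omega
  have hint : ((FT.image (· \ T) : Finset (Finset α)) : Set (Finset α)).Intersecting := by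
    simp only [coe_image]
    rintro _ ⟨A, hA, rfl⟩ _ ⟨B, hB, rfl⟩
    rw [not_disjoint_iff_nonempty_inter, ← card_pos]
    obtain rfl | hAB := eq_or_ne A B
    · rw [inter_self, hlink A hA]; omega
    · have hTAB : T ⊆ A ∩ B := subset_inter (mem_filter.mp hA).2 (mem_filter.mp hB).2
      have h := hforb (mem_filter.mp hA).1 (mem_filter.mp hB).1 hAB
      have := card_le_card hTAB
      calc 0 < #((A ∩ B) \ T) := by rw [card_sdiff_of_subset hTAB]; omega
        _ ≤ #((A \ T) ∩ (B \ T)) := card_le_card fun x => by simp only [mem_inter, mem_sdiff]; tauto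
  by_contra! hno
  refine (card_le_of_intersecting_of_not_star (r := t + 1) ?_ hint ?_).not_gt ?_
  · simpa using hlink
  · rintro ⟨x, hx⟩
    obtain ⟨A, hA⟩ := card_pos.mp (Nat.zero_lt_of_lt hheavy)
    have hxT : x ∉ T := (mem_sdiff.mp (hx _ (mem_image_of_mem _ hA))).2
    obtain ⟨B, hB, hTB, hxB⟩ := hno x hxT
    exact hxB (mem_sdiff.mp (hx _ (mem_image_of_mem _ (mem_filter.mpr ⟨hB, hTB⟩)))).1
  · rwa [card_image_of_injOn hinj, show t + 1 - 2 = t - 1 by omega]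

theorem exists_isSunflower_of_card_filter_superset_gt (ht : t ≠ 0) (hF : ∀ A ∈ F, #A = 2 * t + 1)
    (hforb : (F : Set (Finset α)).Pairwise fun A B => #(A ∩ B) ≠ t) {T : Finset α} (hT : #T = t)
    (hheavy : (2 * t + 2) ^ 2 * (Fintype.card α).choose (t - 1) < #{A ∈ F | T ⊆ A}) :
    ∃ U, T ⊆ U ∧ #U = t + 1 ∧ (∀ A ∈ F, T ⊆ A → U ⊆ A) ∧
      ∃ P ⊆ F, #P = 2 * t + 2 ∧ IsSunflower P U := by
  set N := Fintype.card α
  have hsmall : (t + 1) ^ 2 * (N - 2).choose (t - 1) ≤ (2 * t + 2) ^ 2 * N.choose (t - 1) :=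
    Nat.mul_le_mul (Nat.pow_le_pow_left (by omega) 2) (Nat.choose_le_choose _ (Nat.sub_le _ _))
  obtain ⟨x, hxT, hx⟩ := exists_forall_mem_of_card_filter_superset_gt hF hforb hT
    (hsmall.trans_lt hheavy)
  set U := insert x T
  have hU : #U = t + 1 := by rw [card_insert_of_notMem hxT, hT]
  have hUA : ∀ A ∈ F, T ⊆ A → U ⊆ A := fun A hA hTA => insert_subset (hx A hA hTA) hTA
  have hG : {A ∈ F | U ⊆ A} = {A ∈ F | T ⊆ A} :=
    filter_congr fun A hA => ⟨(subset_insert x T).trans, hUA A hA⟩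
  have hpetal : ∀ A ∈ {A ∈ F | U ⊆ A}, U ⊆ A ∧ #(A \ U) = t := fun A hA => by
    rw [mem_filter] at hA
    refine ⟨hA.2, ?_⟩
    rw [card_sdiff_of_subset hA.2, hF A hA.1, hU]
    omega
  have hdeg : ∀ y ∉ U, #{A ∈ {A ∈ F | U ⊆ A} | y ∈ A} ≤ N.choose (t - 1) := fun y hy => calc
    #{A ∈ {A ∈ F | U ⊆ A} | y ∈ A} ≤ #{A ∈ F | insert y U ⊆ A} := card_le_card fun A hA => by
        simp only [mem_filter] at hA ⊢
        exact ⟨hA.1.1, insert_subset hA.2 hA.1.2⟩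
    _ ≤ (N - #(insert y U)).choose (2 * t + 1 - #(insert y U)) := card_filter_superset_le hF _
    _ ≤ N.choose (t - 1) := by
        rw [card_insert_of_notMem hy, hU, show 2 * t + 1 - (t + 1 + 1) = t - 1 by omega]
        exact Nat.choose_le_choose _ (Nat.sub_le _ _)
  have hbig : (2 * t + 1) * (t * N.choose (t - 1)) < #{A ∈ F | U ⊆ A} := by
    rw [hG, ← mul_assoc]
    refine lt_of_le_of_lt (Nat.mul_le_mul_right _ ?_) hheavy
    nlinarith
  obtain ⟨P, hPG, hPcard, hP⟩ :=
    exists_isSunflower (Nat.pos_of_ne_zero ht) hpetal hdeg (2 * t + 1) hbig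
  exact ⟨U, subset_insert x T, hU, hUA, P, hPG.trans (filter_subset _ _), hPcard, hP⟩

theorem exists_subset_card_filter_superset_le (ht : t ≠ 0) (hF : ∀ A ∈ F, #A = 2 * t + 1)
    (hforb : (F : Set (Finset α)).Pairwise fun A B => #(A ∩ B) ≠ t) {A : Finset α} (hA : A ∈ F) :
    ∃ T ⊆ A, #T = t ∧
      #{B ∈ F | T ⊆ B} ≤ (2 * t + 2) ^ 2 * (Fintype.card α).choose (t - 1) := by
  by_contra! hheavy
  have hcore : ∀ T ∈ A.powersetCard t, ∃ U, T ⊆ U ∧ #U = t + 1 ∧ (∀ B ∈ F, T ⊆ B → U ⊆ B) ∧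
      ∃ P ⊆ F, #P = 2 * t + 2 ∧ IsSunflower P U := fun T hT => by
    rw [mem_powersetCard] at hT
    exact exists_isSunflower_of_card_filter_superset_gt ht hF hforb hT.2 (hheavy T hT.1 hT.2)
  choose! core hTcore hcard hsuper P hPF hPcard hP using hcore
  have havoid : ∀ T ∈ A.powersetCard t, ∀ B ∈ F, #(B ∩ core T) ≠ t := fun T hT B hB =>
    (hP T hT).card_inter_core_ne hforb (hPF T hT) (by rw [hcard T hT]; omega) hB
      (by rw [hF B hB, hPcard T hT]; omega)
  obtain ⟨T, hTA, hT, huncovered⟩ := exists_subset_card_eq_forall_not_subset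
    (𝒞 := (A.powersetCard t).image core) ht (hF A hA)
    (by
      simp only [mem_image, forall_exists_index, and_imp, forall_apply_eq_imp_iff₂]
      exact fun T hT => ⟨hsuper T hT A hA (mem_powersetCard.mp hT).1, hcard T hT⟩)
    (by
      simp only [coe_image]
      rintro _ ⟨T, hT, rfl⟩ _ ⟨T', hT', rfl⟩ hne
      exact (hP T' hT').card_inter_lt (hPF T' hT') (havoid T hT) (hcard T hT) (hcard T' hT') hne
        (by rw [hPcard T' hT']; omega))
  have hT' : T ∈ A.powersetCard t := mem_powersetCard.mpr ⟨hTA, hT⟩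
  exact huncovered (core T) (mem_image_of_mem core hT') (hTcore T hT')

theorem card_le_of_pairwise_card_inter_ne (ht : t ≠ 0) (hF : ∀ A ∈ F, #A = 2 * t + 1)
    (hforb : (F : Set (Finset α)).Pairwise fun A B => #(A ∩ B) ≠ t) :
    #F ≤ (2 * t + 2) ^ 2 * ((Fintype.card α).choose t * (Fintype.card α).choose (t - 1)) := by
  set D := (2 * t + 2) ^ 2 * (Fintype.card α).choose (t - 1)
  set light := {T ∈ (univ : Finset α).powersetCard t | #{B ∈ F | T ⊆ B} ≤ D}
  have hcover : F ⊆ light.biUnion fun T => {B ∈ F | T ⊆ B} := fun A hA => by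
    obtain ⟨T, hTA, hT, hlight⟩ := exists_subset_card_filter_superset_le ht hF hforb hA
    simp only [light, mem_biUnion, mem_filter, mem_powersetCard]
    exact ⟨T, ⟨⟨subset_univ T, hT⟩, hlight⟩, hA, hTA⟩
  calc #F ≤ ∑ T ∈ light, #{B ∈ F | T ⊆ B} := (card_le_card hcover).trans card_biUnion_le
    _ ≤ ∑ _T ∈ light, D := sum_le_sum fun T hT => (mem_filter.mp hT).2
    _ = #light * D := by rw [sum_const, smul_eq_mul]
    _ ≤ (Fintype.card α).choose t * D := by
        gcongr
        exact (card_filter_le _ _).trans (by simp)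
    _ = _ := by ring

theorem card_le_of_intersecting_of_pairwise_card_inter_ne (ht : t ≠ 0)
    (hF : ∀ A ∈ F, #A = 2 * t + 2) (hint : (F : Set (Finset α)).Intersecting)
    (hforb : (F : Set (Finset α)).Pairwise fun A B => #(A ∩ B) ≠ t + 1) :
    #F ≤ (2 * t + 2) ^ 3 * ((Fintype.card α).choose t * (Fintype.card α).choose (t - 1)) := by
  obtain rfl | ⟨a, ha⟩ := F.eq_empty_or_nonempty
  · simp
  obtain ⟨v, hv⟩ := exists_card_le_mul_card_filter_mem_of_intersecting hint ha
  have hlink : #(F.memberSubfamily v) = #{A ∈ F | v ∈ A} :=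
    card_image_of_injOn ((erase_injOn' v).mono fun A hA => (mem_filter.mp hA).2)
  have hlinkF : ∀ A ∈ F.memberSubfamily v, #A = 2 * t + 1 := fun A hA => by
    rw [mem_memberSubfamily] at hA
    have := hF _ hA.1
    rw [card_insert_of_notMem hA.2] at this
    omega
  have hlinkforb : ((F.memberSubfamily v : Finset (Finset α)) : Set (Finset α)).Pairwise
      fun A B => #(A ∩ B) ≠ t := fun A hA B hB hAB => by
    rw [mem_coe, mem_memberSubfamily] at hA hB
    have : #(insert v A ∩ insert v B) ≠ t + 1 :=
      hforb hA.1 hB.1 fun h => hAB (by rw [← erase_insert hA.2, h, erase_insert hB.2])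
    rwa [← insert_inter_distrib, card_insert_of_notMem fun h => hA.2 (mem_inter.mp h).1,
      Ne, Nat.add_right_cancel_iff] at this
  calc #F ≤ #a * #{A ∈ F | v ∈ A} := hv
    _ ≤ (2 * t + 2) * ((2 * t + 2) ^ 2 *
          ((Fintype.card α).choose t * (Fintype.card α).choose (t - 1))) := by
      rw [hF a ha, ← hlink]
      exact Nat.mul_le_mul_left _ (card_le_of_pairwise_card_inter_ne ht hlinkF hlinkforb)
    _ = _ := by ring

end FranklFuredi

open Nat in
theorem two_mul_mul_choose_mul_choose_lt {t n : ℕ} (ht : t ≠ 0)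
    (hn : (2 * t + 2) * (2 * t)! * 2 ^ (2 * t) + 2 * t + 1 < n) :
    2 * (2 * t + 2) * (n.choose t * n.choose (t - 1)) < (n - 2).choose (2 * t) := by
  obtain ⟨s, rfl⟩ : ∃ s, t = s + 1 := ⟨t - 1, by omega⟩
  set m := n - 2 * (s + 1) - 1
  have hm : (2 * (s + 1) + 2) * (2 * (s + 1))! * 2 ^ (2 * (s + 1)) < m := by omega
  have hnm : n ≤ 2 * m := by
    have : 2 * (s + 1) + 2 ≤ (2 * (s + 1) + 2) * (2 * (s + 1))! * 2 ^ (2 * (s + 1)) := by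
      rw [mul_assoc]
      exact Nat.le_mul_of_pos_right _ (by positivity)
    omega
  refine Nat.lt_of_mul_lt_mul_left (a := (2 * (s + 1))!) ?_
  calc (2 * (s + 1))! * (2 * (2 * (s + 1) + 2) * (n.choose (s + 1) * n.choose (s + 1 - 1)))
      ≤ (2 * (s + 1))! * (2 * (2 * (s + 1) + 2) * (n ^ (s + 1) * n ^ s)) := by
        simp only [add_tsub_cancel_right]
        gcongr <;> exact choose_le_pow _ _
    _ ≤ (2 * (s + 1))! * (2 * (2 * (s + 1) + 2) * (2 * m) ^ (2 * s + 1)) := by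
        rw [← pow_add, show s + 1 + s = 2 * s + 1 by ring]
        gcongr
    _ = (2 * (s + 1) + 2) * (2 * (s + 1))! * 2 ^ (2 * (s + 1)) * m ^ (2 * s + 1) := by ring
    _ < m * m ^ (2 * s + 1) := by
        gcongr
        exact pow_pos (by omega) _
    _ = m ^ (2 * (s + 1)) := by ring
    _ ≤ (n - 2).descFactorial (2 * (s + 1)) := by
        convert pow_sub_le_descFactorial (n - 2) (2 * (s + 1)) using 2
        omega
    _ = (2 * (s + 1))! * (n - 2).choose (2 * (s + 1)) := descFactorial_eq_factorial_mul_choose _ _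

/-- If a k-graph (k even, k ≥ 4) on n vertices has at least 2k²·C(n-2,k-2) edges
and is not contained in a star, then there are edges e₁,e₂,e₃ with
e₁ ∩ (e₂ ∪ e₃) = ∅ and |e₂ ∩ e₃| ∈ {0, k/2}. -/
theorem three_edges_exist (k : ℕ) (hk : Even k) (hk4 : 4 ≤ k) :
    ∃ n₀ : ℕ, ∀ n ≥ n₀, ∀ H : Finset (Finset (Fin n)),
      (∀ e ∈ H, e.card = k) →
      2 * k ^ 2 * Nat.choose (n - 2) (k - 2) ≤ H.card →
      (¬ ∃ v : Fin n, ∀ e ∈ H, v ∈ e) →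
      ∃ e₁ ∈ H, ∃ e₂ ∈ H, ∃ e₃ ∈ H,
        e₁ ∩ (e₂ ∪ e₃) = ∅ ∧ ((e₂ ∩ e₃).card = 0 ∨ (e₂ ∩ e₃).card = k / 2) := by
  obtain ⟨t, rfl⟩ : ∃ t, k = 2 * t + 2 := by
    obtain ⟨r, rfl⟩ := hk
    exact ⟨r - 1, by omega⟩
  have ht : t ≠ 0 := by omega
  refine ⟨(2 * t + 2) * (2 * t).factorial * 2 ^ (2 * t) + 2 * t + 2,
    fun n hn H hH hcard hstar => ?_⟩
  by_contra! hno
  simp only [← disjoint_iff_inter_eq_empty, disjoint_union_right, Ne, card_eq_zero,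
    show (2 * t + 2) / 2 = t + 1 by omega] at hno
  simp only [show 2 * t + 2 - 2 = 2 * t by omega] at hcard
  have hC : 0 < (n - 2).choose (2 * t) := Nat.choose_pos (by omega)
  have hside : ∀ f ∈ H, #{A ∈ H | Disjoint f A} ≤
      (2 * t + 2) ^ 3 * (n.choose t * n.choose (t - 1)) := fun f hf => by
    have hno_f := fun A (hA : A ∈ {A ∈ H | Disjoint f A}) B (hB : B ∈ {A ∈ H | Disjoint f A}) =>
      hno f hf A (mem_filter.mp hA).1 B (mem_filter.mp hB).1
        ⟨(mem_filter.mp hA).2, (mem_filter.mp hB).2⟩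
    simpa using card_le_of_intersecting_of_pairwise_card_inter_ne ht
      (fun A hA => hH A (mem_filter.mp hA).1)
      (fun A hA B hB => (hno_f A hA B hB).1) (fun A hA B hB _ => (hno_f A hA B hB).2)
  obtain ⟨e, he, f, hf, hef⟩ : ∃ e ∈ H, ∃ f ∈ H, Disjoint e f := by
    by_contra! hint
    have hsmall := card_le_of_intersecting_of_not_star hH (fun A hA B hB => hint A hA B hB) hstar
    simp only [Fintype.card_fin, show 2 * t + 2 - 2 = 2 * t by omega] at hsmall
    nlinarith
  have hsplit := card_le_card_filter_disjoint_add_card_filter_disjoint hH hef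
  simp only [Fintype.card_fin, show 2 * t + 2 - 2 = 2 * t by omega, hH e he, hH f hf] at hsplit
  have hnum := two_mul_mul_choose_mul_choose_lt ht (n := n) (by omega)
  nlinarith [hside f hf, hside e he]
end

section
/- Let k be even, let V = A ∪ B be a partition of an n-vertex set with n ∈ (k/2)ℕ but n ∉ kℕ, and let B_{n,k}(A,B) be the k-graph on V whose edges are exactly the k-subsets of V intersecting A in an odd number of vertices. Then B_{n,k}(A,B) contains no Hamilton (k/2)-cycle. -/
/-- A Hamilton (k/2)-cycle in a k-graph on vertex set `Fin n` with edge predicate `E`: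
a cyclic sequence of `t = 2n/k` pairwise disjoint (k/2)-sets covering all vertices,
each consecutive union being an edge. -/
def HamHalfCycle (n k : ℕ) (E : Finset (Fin n) → Prop) : Prop :=
  ∃ (t : ℕ) (L : ℕ → Finset (Fin n)), t = 2 * n / k ∧ 0 < t ∧
    (∀ i, L (i + t) = L i) ∧
    (∀ i, (L i).card = k / 2) ∧
    (∀ i < t, ∀ j < t, i ≠ j → Disjoint (L i) (L j)) ∧
    (Finset.range t).biUnion L = Finset.univ ∧
    (∀ i, E (L i ∪ L (i + 1)))

/-- For n ∈ (k/2)ℕ \ kℕ the k-graph of all k-sets odd w.r.t. A has no Hamilton (k/2)-cycle. -/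
theorem odd_graph_no_ham_half_cycle (k n : ℕ) (hk : Even k) (hkpos : 0 < k)
    (hn : k / 2 ∣ n) (hnk : ¬ k ∣ n) (A : Finset (Fin n)) :
    ¬ HamHalfCycle n k (fun e => e.card = k ∧ Odd ((e ∩ A).card)) := by
  rintro ⟨t, L, ht, htpos, hper, hcard, hdisj, hcover, hedge⟩
  obtain ⟨h, rfl⟩ := hk
  have hh : 0 < h := by omega
  have hhalf : (h + h) / 2 = h := by omega
  rw [hhalf] at hn hcard
  obtain ⟨m, rfl⟩ := hn
  -- t = m
  have htm : t = m := by
    rw [ht]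
    have : 2 * (h * m) = (h + h) * m := by ring
    rw [this, Nat.mul_div_cancel_left m (by omega : 0 < h + h)]
  -- m is odd
  have hmodd : Odd m := by
    rcases Nat.even_or_odd m with hm | hm
    · exfalso
      obtain ⟨m', rfl⟩ := hm
      exact hnk ⟨m', by ring⟩
    · exact hm
  subst htm
  -- case t = 1
  rcases Nat.lt_or_ge t 2 with ht1 | ht2
  · have ht1 : t = 1 := by omega
    have hL1 : L 1 = L 0 := by
      have h0 := hper 0
      rwa [show 0 + t = 1 by omega] at h0
    have := (hedge 0).1
    rw [hL1, Finset.union_self, hcard 0] at this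
    omega
  -- case t ≥ 2
  set f : ℕ → ℕ := fun i => ((L i ∩ A).card) with hf
  have hft : L t = L 0 := by simpa using hper 0
  have hkey : ∀ i < t, Odd (f i + f (i + 1)) := by
    intro i hi
    have hdis : Disjoint (L i) (L (i + 1)) := by
      rcases Nat.lt_or_ge (i + 1) t with hlt | hge
      · exact hdisj i hi (i + 1) hlt (by omega)
      · have : i + 1 = t := by omega
        rw [this, hft]
        exact hdisj i hi 0 (by omega) (by omega)
    have hdis' : Disjoint (L i ∩ A) (L (i + 1) ∩ A) :=
      hdis.mono Finset.inter_subset_left Finset.inter_subset_left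
    have hodd := (hedge i).2
    have hsplit : (L i ∪ L (i + 1)) ∩ A = (L i ∩ A) ∪ (L (i + 1) ∩ A) :=
      Finset.union_inter_distrib_right _ _ _
    rw [hsplit, Finset.card_union_of_disjoint hdis'] at hodd
    exact hodd
  -- sum argument
  set S := ∑ i ∈ Finset.range t, (f i + f (i + 1)) with hS
  have hshift : ∑ i ∈ Finset.range t, f (i + 1) = ∑ i ∈ Finset.range t, f i := by
    have h1 := Finset.sum_range_succ' f t
    have h2 := Finset.sum_range_succ f t
    have hf0 : f t = f 0 := by simp [hf, hft]
    omega
  have hSeven : S = 2 * ∑ i ∈ Finset.range t, f i := by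
    rw [hS, Finset.sum_add_distrib, hshift]; ring
  have hSmod : S % 2 = 1 := by
    have : S % 2 = (∑ i ∈ Finset.range t, (f i + f (i + 1)) % 2) % 2 := by
      rw [hS]; exact Finset.sum_nat_mod _ _ _
    rw [this]
    have : ∑ i ∈ Finset.range t, (f i + f (i + 1)) % 2 = ∑ _i ∈ Finset.range t, 1 := by
      apply Finset.sum_congr rfl
      intro i hi
      exact Nat.odd_iff.mp (hkey i (Finset.mem_range.mp hi))
    rw [this, Finset.sum_const, Finset.card_range, smul_eq_mul, mul_one]
    exact Nat.odd_iff.mp hmodd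
  omega
end

section
/- Let k ∈ 4ℕ, n ∈ (k/2)ℕ \ kℕ, and V = A ∪ B a partition such that ⌊n/k⌋ − |A| is odd. Let B'_{n,k}(A,B) be the k-graph whose edges are all k-subsets intersecting A in an odd number of vertices, together with all k-subsets of A containing a fixed vertex v ∈ A. Then B'_{n,k}(A,B) contains no Hamilton (k/2)-cycle. -/
open Finset Function

theorem Function.Periodic.sum_range_add_one {M : Type*} [AddCommMonoid M] {f : ℕ → M} {t : ℕ}
    (hf : Periodic f t) : ∑ i ∈ range t, f (i + 1) = ∑ i ∈ range t, f i := by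
  cases t with
  | zero => simp
  | succ t => rw [sum_range_succ, hf.eq, sum_range_succ' f]

theorem Function.Periodic.sum_range_const_add {M : Type*} [AddCommMonoid M] {f : ℕ → M} {t : ℕ}
    (hf : Periodic f t) (q : ℕ) : ∑ i ∈ range t, f (q + i) = ∑ i ∈ range t, f i := by
  induction q with
  | zero => simp
  | succ q ih =>
    rw [← ih, ← (hf.const_add q).sum_range_add_one]
    simp only [add_right_comm q 1, add_assoc]

theorem sum_range_natCast_zmod_two (t : ℕ) :
    ∑ s ∈ range t, (s : ZMod 2) = ((t / 2 : ℕ) : ZMod 2) := by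
  induction t with
  | zero => simp
  | succ t ih =>
    rw [sum_range_succ, ih, ← Nat.cast_add, ZMod.natCast_eq_natCast_iff']
    rcases Nat.even_or_odd' t with ⟨r, rfl | rfl⟩ <;> omega

section CyclicBinarySequence

/- A *stall* of a binary sequence `b` is an index `i` with `b (i + 1) = b i`; for the parity
sequence of a Hamilton cycle these are the even edges. -/

variable {b : ℕ → ZMod 2} {t : ℕ}

theorem Function.Periodic.natCast_card_stalls (hb : Periodic b t) :
    (#{i ∈ range t | b (i + 1) = b i} : ZMod 2) = t := by
  have hflip : ∀ x y : ZMod 2, x - y + (if x = y then 1 else 0) = 1 := by decide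
  have hsum := sum_congr rfl fun i (_ : i ∈ range t) => hflip (b (i + 1)) (b i)
  rw [sum_add_distrib, sum_range_sub, hb.eq, sub_self, zero_add, sum_boole,
    sum_const, card_range, nsmul_one] at hsum
  exact hsum

theorem Function.Periodic.sum_range_eq_of_stalls_modEq (hb : Periodic b t) {p : ℕ}
    (hp : b (p + 1) = 0) (hstall : ∀ i, b (i + 1) = b i → i ≡ p [MOD t]) :
    ∑ i ∈ range t, b i = ∑ s ∈ range t, (s : ZMod 2) := by
  have hchain : ∀ s < t, b (p + 1 + s) = s := by
    intro s
    induction s with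
    | zero => intro; simpa using hp
    | succ s ih =>
      intro hs
      have hflip : b (p + 1 + s + 1) ≠ b (p + 1 + s) := by
        intro h
        have hdvd := Nat.modEq_zero_iff_dvd.mp
          (Nat.ModEq.add_left_cancel' p (by simpa [add_assoc, add_comm 1 s] using hstall _ h))
        exact Nat.succ_ne_zero s (Nat.eq_zero_of_dvd_of_lt hdvd hs)
      have hne : ∀ x y : ZMod 2, x ≠ y → x = y + 1 := by decide
      rw [← add_assoc, hne _ _ hflip, ih (by omega), Nat.cast_succ]
  rw [← hb.sum_range_const_add (p + 1)]
  exact sum_congr rfl fun s hs => hchain s (mem_range.mp hs)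

theorem Function.Periodic.sum_range_eq_of_card_stalls_eq_one (hb : Periodic b t)
    (hone : #{i ∈ range t | b (i + 1) = b i} = 1)
    (hzero : ∀ i, b (i + 1) = b i → b (i + 1) = 0) :
    ∑ i ∈ range t, b i = ((t / 2 : ℕ) : ZMod 2) := by
  obtain ⟨p, hp⟩ := card_eq_one.mp hone
  have hpmem : p ∈ {i ∈ range t | b (i + 1) = b i} := hp ▸ mem_singleton_self p
  rw [mem_filter, mem_range] at hpmem
  obtain ⟨hpt, hpstall⟩ := hpmem
  rw [hb.sum_range_eq_of_stalls_modEq (hzero p hpstall), sum_range_natCast_zmod_two]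
  intro i hi
  have himod : i % t ∈ {i ∈ range t | b (i + 1) = b i} := by
    refine mem_filter.mpr ⟨mem_range.mpr (Nat.mod_lt _ (Nat.zero_lt_of_lt hpt)), ?_⟩
    rw [hb.map_mod_nat, ← hb.map_mod_nat, Nat.mod_add_mod, hb.map_mod_nat, hi]
  rw [hp, mem_singleton] at himod
  rw [Nat.ModEq, himod, Nat.mod_eq_of_lt hpt]

end CyclicBinarySequence

section CyclicPartition

variable {α : Type*} {t : ℕ} {L : ℕ → Finset α}

theorem modEq_of_mem_of_mem (ht : 0 < t) (hL : Periodic L t)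
    (hdisj : ∀ i < t, ∀ j < t, i ≠ j → Disjoint (L i) (L j)) {x : α} {i j : ℕ}
    (hi : x ∈ L i) (hj : x ∈ L j) : i ≡ j [MOD t] := by
  rw [← hL.map_mod_nat] at hi hj
  by_contra hij
  exact disjoint_left.mp (hdisj _ (Nat.mod_lt i ht) _ (Nat.mod_lt j ht) hij) hi hj

theorem card_filter_mem_add_le_one [DecidableEq α] (ht : 0 < t) (hL : Periodic L t)
    (hdisj : ∀ i < t, ∀ j < t, i ≠ j → Disjoint (L i) (L j)) (x : α) (c : ℕ) :
    #{i ∈ range t | x ∈ L (i + c)} ≤ 1 := by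
  refine card_le_one.mpr fun i hi j hj => ?_
  simp only [mem_filter, mem_range] at hi hj
  have hij := (modEq_of_mem_of_mem ht hL hdisj hi.2 hj.2).add_right_cancel' c
  rwa [Nat.ModEq, Nat.mod_eq_of_lt hi.1, Nat.mod_eq_of_lt hj.1] at hij

theorem card_filter_mem_or_mem_succ_le_two [DecidableEq α] (ht : 0 < t) (hL : Periodic L t)
    (hdisj : ∀ i < t, ∀ j < t, i ≠ j → Disjoint (L i) (L j)) (x : α) :
    #{i ∈ range t | x ∈ L i ∨ x ∈ L (i + 1)} ≤ 2 := by
  rw [filter_or]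
  refine (card_union_le _ _).trans ?_
  have h₀ := card_filter_mem_add_le_one ht hL hdisj x 0
  have h₁ := card_filter_mem_add_le_one ht hL hdisj x 1
  simp only [add_zero] at h₀
  omega

theorem sum_card_inter_eq_card [Fintype α] [DecidableEq α]
    (hdisj : ∀ i < t, ∀ j < t, i ≠ j → Disjoint (L i) (L j))
    (hcover : (range t).biUnion L = univ) (s : Finset α) :
    ∑ i ∈ range t, #(L i ∩ s) = #s := by
  rw [← card_biUnion, ← biUnion_inter, hcover, univ_inter]
  intro i hi j hj hij
  exact (hdisj i (mem_range.mp hi) j (mem_range.mp hj) hij).mono inter_subset_left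
    inter_subset_left

end CyclicPartition

theorem parity_eq_zero_and_mem_of_parity_eq {α : Type*} [DecidableEq α] {k : ℕ} (hk : 4 ∣ k)
    {A P Q : Finset α} {v : α} (hP : #P = k / 2) (hQ : #Q = k / 2)
    (hE : #(P ∪ Q) = k ∧ (Odd #((P ∪ Q) ∩ A) ∨ (P ∪ Q ⊆ A ∧ v ∈ P ∪ Q)))
    (hpar : (#(Q ∩ A) : ZMod 2) = #(P ∩ A)) :
    (#(Q ∩ A) : ZMod 2) = 0 ∧ (v ∈ P ∨ v ∈ Q) := by
  obtain ⟨hcard, hodd | ⟨hsub, hv⟩⟩ := hE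
  · have hPQ : Disjoint P Q := card_union_eq_card_add_card.mp (by omega)
    rw [union_inter_distrib_right, card_union_of_disjoint
      (hPQ.mono inter_subset_left inter_subset_left), ← ZMod.natCast_eq_one_iff_odd,
      Nat.cast_add, hpar] at hodd
    exact absurd hodd (by rw [CharTwo.add_self_eq_zero]; exact zero_ne_one)
  · rw [inter_eq_left.mpr (union_subset_iff.mp hsub).2, hQ, ZMod.natCast_eq_zero_iff_even]
    exact ⟨even_iff_two_dvd.mpr (by omega), mem_union.mp hv⟩

theorem odd_two_mul_div_and_div_eq_half {k n : ℕ} (hk : 2 ∣ k) (hkpos : 0 < k) (hn : k / 2 ∣ n)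
    (hnk : ¬ k ∣ n) : Odd (2 * n / k) ∧ n / k = 2 * n / k / 2 := by
  obtain ⟨a, rfl⟩ := hk
  have ha : 0 < a := by omega
  rw [Nat.mul_div_cancel_left a two_pos] at hn
  obtain ⟨m, rfl⟩ := hn
  rw [← mul_assoc, mul_comm 2 a, Nat.mul_div_cancel_left m (by omega),
    Nat.mul_div_mul_left m 2 ha]
  refine ⟨Nat.odd_iff.mpr ?_, rfl⟩
  rcases Nat.even_or_odd' m with ⟨r, rfl | rfl⟩
  · exact absurd ⟨r, by ring⟩ hnk
  · omega

theorem Bprime_no_ham_half_cycle_general (k n : ℕ) (hk4 : 4 ∣ k) (hkpos : 0 < k)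
    (hn : k / 2 ∣ n) (hnk : ¬ k ∣ n)
    (A : Finset (Fin n)) (v : Fin n)
    (hodd : Odd ((n / k : ℤ) - (A.card : ℤ))) :
    ¬ HamHalfCycle n k
      (fun e => e.card = k ∧ (Odd ((e ∩ A).card) ∨ (e ⊆ A ∧ v ∈ e))) := by
  rintro ⟨t, L, ht, htpos, hL, hcard, hdisj, hcover, hE⟩
  obtain ⟨htodd, hnk_eq⟩ :=
    odd_two_mul_div_and_div_eq_half (dvd_trans (by norm_num) hk4) hkpos hn hnk
  rw [← ht] at htodd hnk_eq
  set b : ℕ → ZMod 2 := fun i => #(L i ∩ A)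
  have hb : Periodic b t := fun i => by simp only [b, hL i]
  have hstall (i : ℕ) (h : b (i + 1) = b i) : b (i + 1) = 0 ∧ (v ∈ L i ∨ v ∈ L (i + 1)) :=
    parity_eq_zero_and_mem_of_parity_eq hk4 (hcard i) (hcard (i + 1)) (hE i) h
  have hone : #{i ∈ range t | b (i + 1) = b i} = 1 := by
    have hle := (card_le_card (monotone_filter_right _ fun i _ h => (hstall i h).2)).trans
      (card_filter_mem_or_mem_succ_le_two htpos hL hdisj v)
    have hpar := (ZMod.natCast_eq_natCast_iff' _ _ 2).mp hb.natCast_card_stalls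
    rw [Nat.odd_iff] at htodd
    omega
  have hsum := hb.sum_range_eq_of_card_stalls_eq_one hone fun i h => (hstall i h).1
  rw [← Nat.cast_sum, sum_card_inter_eq_card hdisj hcover, ← hnk_eq,
    ZMod.natCast_eq_natCast_iff'] at hsum
  rw [← Int.natCast_div] at hodd
  obtain ⟨c, hc⟩ := hodd
  omega

/-- For k ∈ 4ℕ, n ∈ (k/2)ℕ \ kℕ, ⌊n/k⌋ − |A| odd, the k-graph B' consisting of all
k-sets odd w.r.t. A together with all k-subsets of A containing a fixed v ∈ A has
no Hamilton (k/2)-cycle. -/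
theorem Bprime_no_ham_half_cycle (k n : ℕ) (hk4 : 4 ∣ k) (hkpos : 0 < k)
    (hn : k / 2 ∣ n) (hnk : ¬ k ∣ n)
    (A : Finset (Fin n)) (v : Fin n) (hv : v ∈ A)
    (hodd : Odd ((n / k : ℤ) - (A.card : ℤ))) :
    ¬ HamHalfCycle n k
      (fun e => e.card = k ∧ (Odd ((e ∩ A).card) ∨ (e ⊆ A ∧ v ∈ e))) :=
  Bprime_no_ham_half_cycle_general k n hk4 hkpos hn hnk A v hodd
end

section
/- Let k ≥ 4 be even, n ∈ kℕ, and V = A ∪ B with |A| = |B| = n/2. Then the minimum codegree of B̄_{n,k}(A,B) (edges = k-sets even with respect to A) equals n/2 − k + 1, and the minimum codegree of B_{n,k}(A,B) (edges = k-sets odd with respect to A) equals n/2 − k + 2, provided n is sufficiently large relative to k. -/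
/-!
Adding a vertex `v ∉ S` to a `(k-1)`-set `S` changes the parity of `|S ∩ A|` exactly when
`v ∈ A`. So the vertices completing `S` to an edge form `B \ S` or `A \ S`, according to the
parity of `j = |S ∩ A|`, and the codegree of `S` is `n/2 - (k - 1 - j)` or `n/2 - j`. Since
`k - 1` is odd, the admissible `j` make this at least `n/2 - k + 1` for even edges (equality
at `j = 0`) and at least `n/2 - k + 2` for odd edges (equality at `j = 1`).
-/

open Finset

theorem even_card_insert_inter_iff {α : Type*} [DecidableEq α] {A S : Finset α} {v : α}
    (hv : v ∉ S) : Even #(insert v S ∩ A) ↔ (Even #(S ∩ A) ↔ v ∉ A) := by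
  by_cases hvA : v ∈ A
  · rw [insert_inter_of_mem hvA, card_insert_of_notMem (fun h => hv (mem_inter.1 h).1),
      Nat.even_add_one]
    simp [hvA]
  · simp [insert_inter_of_notMem hvA, hvA]

section

variable {α : Type*} [Fintype α] [DecidableEq α] (A S : Finset α)

theorem filter_even_card_insert_inter :
    univ.filter (fun v => v ∉ S ∧ Even #(insert v S ∩ A)) =
      (if Even #(S ∩ A) then univ \ A else A) \ S := by
  ext v
  by_cases hv : v ∈ S
  · simp [hv]
  · rw [mem_filter, even_card_insert_inter_iff hv]
    split_ifs with h <;> simp [h, hv]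

theorem filter_odd_card_insert_inter :
    univ.filter (fun v => v ∉ S ∧ Odd #(insert v S ∩ A)) =
      (if Even #(S ∩ A) then A else univ \ A) \ S := by
  ext v
  by_cases hv : v ∈ S
  · simp [hv]
  · rw [mem_filter, ← Nat.not_even_iff_odd, even_card_insert_inter_iff hv]
    split_ifs with h <;> simp [h, hv]

theorem card_univ_sdiff_sdiff : #((univ \ A) \ S) = #(univ \ A) - (#S - #(S ∩ A)) := by
  rw [card_sdiff (s := S), ← inter_sdiff_assoc, inter_univ, card_sdiff (s := A) (t := S),
    inter_comm A]

theorem card_filter_even_card_insert_inter :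
    #(univ.filter (fun v => v ∉ S ∧ Even #(insert v S ∩ A))) =
      if Even #(S ∩ A) then #(univ \ A) - (#S - #(S ∩ A)) else #A - #(S ∩ A) := by
  rw [filter_even_card_insert_inter]
  split_ifs
  · exact card_univ_sdiff_sdiff A S
  · exact card_sdiff

theorem card_filter_odd_card_insert_inter :
    #(univ.filter (fun v => v ∉ S ∧ Odd #(insert v S ∩ A))) =
      if Even #(S ∩ A) then #A - #(S ∩ A) else #(univ \ A) - (#S - #(S ∩ A)) := by
  rw [filter_odd_card_insert_inter]
  split_ifs
  · exact card_sdiff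
  · exact card_univ_sdiff_sdiff A S

theorem exists_card_eq_card_inter_eq {i j : ℕ} (hi : i ≤ #A) (hj : j ≤ #(univ \ A)) :
    ∃ S : Finset α, #S = i + j ∧ #(S ∩ A) = i := by
  obtain ⟨X, hXA, rfl⟩ := exists_subset_card_eq hi
  obtain ⟨Y, hYB, rfl⟩ := exists_subset_card_eq hj
  have hYA : Disjoint Y A := disjoint_of_subset_left hYB sdiff_disjoint
  refine ⟨X ∪ Y, card_union_of_disjoint (disjoint_of_subset_left hXA hYA.symm), ?_⟩
  rw [union_inter_distrib_right, inter_eq_left.2 hXA, disjoint_iff_inter_eq_empty.1 hYA,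
    union_empty]

end

theorem codegree_parity_graphs_general (k : ℕ) (hk : Even k) :
    ∃ n₀ : ℕ, ∀ n ≥ n₀, k ∣ n → ∀ A : Finset (Fin n),
      A.card = n / 2 → (Finset.univ \ A).card = n / 2 →
      ((∀ S : Finset (Fin n), S.card = k - 1 →
          n / 2 - k + 1 ≤
            (Finset.univ.filter (fun v => v ∉ S ∧ Even (((insert v S) ∩ A).card))).card) ∧
       (∃ S : Finset (Fin n), S.card = k - 1 ∧
          (Finset.univ.filter (fun v => v ∉ S ∧ Even (((insert v S) ∩ A).card))).card
            = n / 2 - k + 1) ∧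
       (∀ S : Finset (Fin n), S.card = k - 1 →
          n / 2 - k + 2 ≤
            (Finset.univ.filter (fun v => v ∉ S ∧ Odd (((insert v S) ∩ A).card))).card) ∧
       (∃ S : Finset (Fin n), S.card = k - 1 ∧
          (Finset.univ.filter (fun v => v ∉ S ∧ Odd (((insert v S) ∩ A).card))).card
            = n / 2 - k + 2)) := by
  refine ⟨2 * k + 1, fun n hn hdvd A hA hB => ?_⟩
  have hk0 : k ≠ 0 := by
    rintro rfl
    rw [zero_dvd_iff] at hdvd
    omega
  rw [Nat.even_iff] at hk
  obtain ⟨S₀, hS₀, hS₀A⟩ := exists_card_eq_card_inter_eq A (i := 0) (j := k - 1) (by omega)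
    (by omega)
  obtain ⟨S₁, hS₁, hS₁A⟩ := exists_card_eq_card_inter_eq A (i := 1) (j := k - 2) (by omega)
    (by omega)
  simp only [card_filter_even_card_insert_inter, card_filter_odd_card_insert_inter, hA, hB]
  have hSA (S : Finset (Fin n)) : #(S ∩ A) ≤ #S := card_le_card inter_subset_left
  refine ⟨fun S hS => ?_, ⟨S₀, by omega, ?_⟩, fun S hS => ?_, ⟨S₁, by omega, ?_⟩⟩
  · have := hSA S
    split_ifs with h <;> rw [Nat.even_iff] at h <;> omega
  · simp only [hS₀A, Even.zero, if_true]
    omega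
  · have := hSA S
    split_ifs with h <;> rw [Nat.even_iff] at h <;> omega
  · simp only [hS₁A, Nat.not_even_one, if_false]
    omega

/-- Minimum codegrees of the parity k-graphs: for |A| = |B| = n/2, n ∈ kℕ and n large,
δ_{k-1}(B̄) = n/2 − k + 1 and δ_{k-1}(B) = n/2 − k + 2. -/
theorem codegree_parity_graphs (k : ℕ) (hk : Even k) (hk4 : 4 ≤ k) :
    ∃ n₀ : ℕ, ∀ n ≥ n₀, k ∣ n → ∀ A : Finset (Fin n),
      A.card = n / 2 → (Finset.univ \ A).card = n / 2 →
      ((∀ S : Finset (Fin n), S.card = k - 1 →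
          n / 2 - k + 1 ≤
            (Finset.univ.filter (fun v => v ∉ S ∧ Even (((insert v S) ∩ A).card))).card) ∧
       (∃ S : Finset (Fin n), S.card = k - 1 ∧
          (Finset.univ.filter (fun v => v ∉ S ∧ Even (((insert v S) ∩ A).card))).card
            = n / 2 - k + 1) ∧
       (∀ S : Finset (Fin n), S.card = k - 1 →
          n / 2 - k + 2 ≤
            (Finset.univ.filter (fun v => v ∉ S ∧ Odd (((insert v S) ∩ A).card))).card) ∧
       (∃ S : Finset (Fin n), S.card = k - 1 ∧
          (Finset.univ.filter (fun v => v ∉ S ∧ Odd (((insert v S) ∩ A).card))).card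
            = n / 2 - k + 2)) :=
  codegree_parity_graphs_general k hk
end

section
/- Let Ω be a finite probability space with a filtration F₀ ⊆ … ⊆ F_n of partitions. For each i ∈ [n] let Y_i be an F_i-measurable Bernoulli random variable and p_i an F_{i−1}-measurable real random variable. Let x ∈ ℝ and δ ∈ (0, 3/2), and set X = Y₁ + … + Y_n. If almost surely Σ p_i ≥ x and E[Y_i | F_{i−1}] ≥ p_i for all i, then P(X < (1−δ)x) < e^{−δ²x/3}. -/
/-!
Put `s = 1 - exp (-δ)`. For a Bernoulli `Y` one has `exp (-δ Y) = 1 - s Y`, and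
`exp (s p) (1 - s p) ≤ 1`; together with `E[Y_i | F_{i-1}] ≥ p_i` this makes
`exp (∑_{i ≤ k} (s p_i - δ Y_i))` a supermartingale, so its expectation is at most `1`.
On the event `X < (1 - δ) x` the exponent at time `n` is at least `s x - δ (1 - δ) x`, and the
Chernoff bound gives `P(X < (1 - δ) x) ≤ exp (δ (1 - δ) x - s x) ≤ exp (-δ² x / 2)`,
because `s ≥ δ - δ² / 2`.
-/

open MeasureTheory ProbabilityTheory Real

lemma Real.exp_neg_le_one_sub_add_sq_div_two {a : ℝ} (ha : 0 ≤ a) :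
    exp (-a) ≤ 1 - a + a ^ 2 / 2 := by
  have hpos : 0 < 1 + a + a ^ 2 / 2 := by positivity
  calc exp (-a) = (exp a)⁻¹ := exp_neg a
    _ ≤ (1 + a + a ^ 2 / 2)⁻¹ := inv_anti₀ hpos (quadratic_le_exp_of_nonneg ha)
    _ ≤ 1 - a + a ^ 2 / 2 := by
      rw [inv_eq_one_div, div_le_iff₀ hpos]
      nlinarith [pow_nonneg ha 4]

lemma Real.exp_mul_one_sub_le_one (a : ℝ) : exp a * (1 - a) ≤ 1 :=
  calc exp a * (1 - a) ≤ exp a * exp (-a) := by gcongr; exact one_sub_le_exp_neg a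
    _ = 1 := by rw [← exp_add, add_neg_cancel, exp_zero]

lemma Real.exp_neg_mul_of_eq_zero_or_eq_one {y : ℝ} (hy : y = 0 ∨ y = 1) (δ : ℝ) :
    exp (-(δ * y)) = 1 - (1 - exp (-δ)) * y := by
  rcases hy with rfl | rfl <;> simp

lemma Real.sq_mul_div_three_lt_one_sub_exp_neg_mul_sub {δ x : ℝ} (hδ : 0 < δ) (hx : 0 < x) :
    δ ^ 2 * x / 3 < (1 - exp (-δ)) * x - δ * ((1 - δ) * x) := by
  have hs : δ - δ ^ 2 / 2 ≤ 1 - exp (-δ) := by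
    linarith [exp_neg_le_one_sub_add_sq_div_two hδ.le]
  nlinarith [mul_le_mul_of_nonneg_right hs hx.le, mul_pos (mul_pos hδ hδ) hx]

lemma Measurable.integrable_of_finite {Ω : Type*} [Finite Ω] {m0 : MeasurableSpace Ω}
    {μ : Measure Ω} [IsFiniteMeasure μ] {f : Ω → ℝ} (hf : Measurable f) : Integrable f μ :=
  ⟨hf.aestronglyMeasurable, .of_finite⟩

namespace MeasureTheory

variable {Ω : Type*} {m m0 : MeasurableSpace Ω} {μ : Measure Ω}

lemma integral_mul_condExp_of_stronglyMeasurable_left (hm : m ≤ m0) [SigmaFinite (μ.trim hm)]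
    {W Y : Ω → ℝ} (hW : StronglyMeasurable[m] W) (hWY : Integrable (W * Y) μ)
    (hY : Integrable Y μ) :
    ∫ ω, W ω * (μ[Y | m]) ω ∂μ = ∫ ω, W ω * Y ω ∂μ := by
  calc ∫ ω, W ω * (μ[Y | m]) ω ∂μ = ∫ ω, (μ[W * Y | m]) ω ∂μ :=
        integral_congr_ae (condExp_mul_of_stronglyMeasurable_left hW hWY hY).symm
    _ = ∫ ω, W ω * Y ω ∂μ := integral_condExp hm

theorem integral_mul_exp_le_of_le_condExp [Finite Ω] [IsFiniteMeasure μ] (hm : m ≤ m0)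
    {G q Y : Ω → ℝ} {δ : ℝ} (hδ : 0 ≤ δ) (hG : Measurable[m] G) (hG0 : 0 ≤ G)
    (hq : Measurable[m] q) (hY : Measurable Y) (hY01 : ∀ ω, Y ω = 0 ∨ Y ω = 1)
    (hqY : q ≤ᵐ[μ] μ[Y | m]) :
    ∫ ω, G ω * exp ((1 - exp (-δ)) * q ω - δ * Y ω) ∂μ ≤ ∫ ω, G ω ∂μ := by
  set s := 1 - exp (-δ)
  have hs : 0 ≤ s := sub_nonneg.2 (exp_le_one_iff.2 (neg_nonpos.2 hδ))
  set W : Ω → ℝ := fun ω => G ω * exp (s * q ω)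
  have hWm : Measurable[m] W := hG.mul (hq.const_mul s).exp
  have hW : Measurable W := hWm.mono hm le_rfl
  have hW0 : ∀ ω, 0 ≤ W ω := fun ω => mul_nonneg (hG0 ω) (exp_pos _).le
  have hcondY : Measurable (μ[Y | m]) := stronglyMeasurable_condExp.measurable.mono hm le_rfl
  have hint : ∀ f : Ω → ℝ, Measurable f → Integrable f μ := fun f hf => hf.integrable_of_finite
  have hq0 : Measurable q := hq.mono hm le_rfl
  calc ∫ ω, G ω * exp (s * q ω - δ * Y ω) ∂μ = ∫ ω, W ω - s * (W ω * Y ω) ∂μ := by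
        refine integral_congr_ae (Filter.Eventually.of_forall fun ω => ?_)
        simp only [W, sub_eq_add_neg (s * q ω), exp_add, exp_neg_mul_of_eq_zero_or_eq_one (hY01 ω)]
        ring
    _ = ∫ ω, W ω - s * (W ω * (μ[Y | m]) ω) ∂μ := by
        rw [integral_sub (hint _ hW) (hint _ (by fun_prop)),
          integral_sub (hint _ hW) (hint _ (by fun_prop)), integral_const_mul,
          integral_const_mul, integral_mul_condExp_of_stronglyMeasurable_left hm
            hWm.stronglyMeasurable (hint _ (by fun_prop)) (hint _ hY)]
    _ ≤ ∫ ω, W ω * (1 - s * q ω) ∂μ := by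
        refine integral_mono_ae (hint _ (by fun_prop)) (hint _ (by fun_prop)) ?_
        filter_upwards [hqY] with ω hω
        nlinarith [mul_le_mul_of_nonneg_left hω (mul_nonneg hs (hW0 ω))]
    _ ≤ ∫ ω, G ω ∂μ := by
        refine integral_mono (hint _ (by fun_prop)) (hint _ (hG.mono hm le_rfl)) fun ω => ?_
        calc W ω * (1 - s * q ω) = G ω * (exp (s * q ω) * (1 - s * q ω)) := mul_assoc _ _ _
          _ ≤ G ω * 1 := by gcongr; exacts [hG0 ω, exp_mul_one_sub_le_one _]
          _ = G ω := mul_one _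

lemma measureReal_le_exp_neg_of_integral_exp_le_one [IsFiniteMeasure μ] {S : Ω → ℝ}
    (hS : Integrable (fun ω => exp (S ω)) μ) (h : ∫ ω, exp (S ω) ∂μ ≤ 1) (ε : ℝ) :
    μ.real {ω | ε ≤ S ω} ≤ exp (-ε) :=
  calc μ.real {ω | ε ≤ S ω} ≤ exp (-1 * ε) * mgf S μ 1 :=
        measure_ge_le_exp_mul_mgf ε zero_le_one (by simpa using hS)
    _ ≤ exp (-ε) := by
        rw [neg_one_mul]
        exact mul_le_of_le_one_right (exp_pos _).le (by simpa [mgf] using h)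

section Filtration

variable {F : ℕ → MeasurableSpace Ω} {Y p : ℕ → Ω → ℝ} {n : ℕ}

lemma measurable_sum_Icc_mul_sub_mul (hF_mono : Monotone F)
    (hYmeas : ∀ i ∈ Finset.Icc 1 n, Measurable[F i] (Y i))
    (hpmeas : ∀ i ∈ Finset.Icc 1 n, Measurable[F (i - 1)] (p i)) (s δ : ℝ) {k : ℕ}
    (hk : k ≤ n) :
    Measurable[F k] fun ω => ∑ i ∈ Finset.Icc 1 k, (s * p i ω - δ * Y i ω) := by
  refine Finset.measurable_sum _ fun i hi => ?_
  obtain ⟨hi1, hik⟩ := Finset.mem_Icc.1 hi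
  have hin : i ∈ Finset.Icc 1 n := Finset.mem_Icc.2 ⟨hi1, hik.trans hk⟩
  exact (((hpmeas i hin).mono (hF_mono (by omega)) le_rfl).const_mul s).sub
    (((hYmeas i hin).mono (hF_mono hik) le_rfl).const_mul δ)

theorem integral_exp_sum_Icc_le_one [Finite Ω] [IsProbabilityMeasure μ]
    (hF_le : ∀ i, F i ≤ m0) (hF_mono : Monotone F)
    (hY01 : ∀ i ∈ Finset.Icc 1 n, ∀ ω, Y i ω = 0 ∨ Y i ω = 1)
    (hYmeas : ∀ i ∈ Finset.Icc 1 n, Measurable[F i] (Y i))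
    (hpmeas : ∀ i ∈ Finset.Icc 1 n, Measurable[F (i - 1)] (p i))
    (hcond : ∀ i ∈ Finset.Icc 1 n, ∀ᵐ ω ∂μ, p i ω ≤ (μ[Y i | F (i - 1)]) ω)
    {δ : ℝ} (hδ : 0 ≤ δ) {k : ℕ} (hk : k ≤ n) :
    ∫ ω, exp (∑ i ∈ Finset.Icc 1 k, ((1 - exp (-δ)) * p i ω - δ * Y i ω)) ∂μ ≤ 1 := by
  induction k with
  | zero => simp
  | succ k ih =>
    have hk1 : k + 1 ∈ Finset.Icc 1 n := Finset.mem_Icc.2 ⟨by omega, hk⟩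
    calc ∫ ω, exp (∑ i ∈ Finset.Icc 1 (k + 1), ((1 - exp (-δ)) * p i ω - δ * Y i ω)) ∂μ
        = ∫ ω, exp (∑ i ∈ Finset.Icc 1 k, ((1 - exp (-δ)) * p i ω - δ * Y i ω)) *
            exp ((1 - exp (-δ)) * p (k + 1) ω - δ * Y (k + 1) ω) ∂μ := by
          simp only [Finset.sum_Icc_succ_top (Nat.le_add_left 1 k), exp_add]
      _ ≤ ∫ ω, exp (∑ i ∈ Finset.Icc 1 k, ((1 - exp (-δ)) * p i ω - δ * Y i ω)) ∂μ :=
          integral_mul_exp_le_of_le_condExp (hF_le k) hδ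
            (measurable_sum_Icc_mul_sub_mul hF_mono hYmeas hpmeas _ δ (by omega)).exp
            (fun _ => (exp_pos _).le) (hpmeas _ hk1) ((hYmeas _ hk1).mono (hF_le _) le_rfl)
            (hY01 _ hk1) (hcond _ hk1)
      _ ≤ 1 := ih (by omega)

end Filtration

end MeasureTheory

/-- Sequential concentration inequality (Lemma 2.2 in ABHKP16). -/
theorem sequential_concentration {Ω : Type*} [Fintype Ω] {m0 : MeasurableSpace Ω}
    (μ : Measure Ω) [IsProbabilityMeasure μ]
    (n : ℕ) (F : ℕ → MeasurableSpace Ω) (hF_le : ∀ i, F i ≤ m0) (hF_mono : Monotone F)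
    (Y : ℕ → Ω → ℝ) (p : ℕ → Ω → ℝ)
    (hY01 : ∀ i ∈ Finset.Icc 1 n, ∀ ω, Y i ω = 0 ∨ Y i ω = 1)
    (hYmeas : ∀ i ∈ Finset.Icc 1 n, Measurable[F i] (Y i))
    (hpmeas : ∀ i ∈ Finset.Icc 1 n, Measurable[F (i - 1)] (p i))
    (x δ : ℝ) (hδ : δ ∈ Set.Ioo (0 : ℝ) (3 / 2))
    (hsum : ∀ᵐ ω ∂μ, x ≤ ∑ i ∈ Finset.Icc 1 n, p i ω)
    (hcond : ∀ i ∈ Finset.Icc 1 n, ∀ᵐ ω ∂μ, p i ω ≤ (μ[Y i | F (i - 1)]) ω) :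
    (μ {ω | ∑ i ∈ Finset.Icc 1 n, Y i ω < (1 - δ) * x}).toReal
      < Real.exp (-δ ^ 2 * x / 3) := by
  obtain ⟨hδ0, -⟩ := hδ
  rcases lt_trichotomy x 0 with hx | rfl | hx
  · calc μ.real _ ≤ 1 := measureReal_le_one
      _ < exp (-δ ^ 2 * x / 3) := one_lt_exp_iff.2 (by nlinarith [pow_pos hδ0 2])
  · have hY0 : ∀ ω, 0 ≤ ∑ i ∈ Finset.Icc 1 n, Y i ω := fun ω => Finset.sum_nonneg fun i hi => by
      rcases hY01 i hi ω with h | h <;> simp [h]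
    simp [not_lt.2 (hY0 _)]
  set s := 1 - exp (-δ)
  set S : Ω → ℝ := fun ω => ∑ i ∈ Finset.Icc 1 n, (s * p i ω - δ * Y i ω)
  have hS : Measurable S :=
    (measurable_sum_Icc_mul_sub_mul hF_mono hYmeas hpmeas s δ le_rfl).mono (hF_le n) le_rfl
  have hs : 0 ≤ s := sub_nonneg.2 (exp_le_one_iff.2 (by linarith))
  have hevent : {ω | ∑ i ∈ Finset.Icc 1 n, Y i ω < (1 - δ) * x}
      ≤ᵐ[μ] {ω | s * x - δ * ((1 - δ) * x) ≤ S ω} := by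
    filter_upwards [hsum] with ω hp (hY : _ < _)
    change _ ≤ S ω
    simp only [S, Finset.sum_sub_distrib, ← Finset.mul_sum]
    nlinarith [mul_le_mul_of_nonneg_left hp hs, mul_le_mul_of_nonneg_left hY.le hδ0.le]
  have hexp : ∫ ω, exp (S ω) ∂μ ≤ 1 :=
    integral_exp_sum_Icc_le_one hF_le hF_mono hY01 hYmeas hpmeas hcond hδ0.le le_rfl
  calc μ.real _ ≤ μ.real {ω | s * x - δ * ((1 - δ) * x) ≤ S ω} :=
        ENNReal.toReal_mono (measure_ne_top _ _) (measure_mono_ae hevent)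
    _ ≤ exp (-(s * x - δ * ((1 - δ) * x))) :=
        measureReal_le_exp_neg_of_integral_exp_le_one hS.exp.integrable_of_finite hexp _
    _ < exp (-δ ^ 2 * x / 3) :=
        exp_lt_exp.2 (by linarith [sq_mul_div_three_lt_one_sub_exp_neg_mul_sub hδ0 hx])
end
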